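/- Let G be a finite non-solvable group and n ≥ 2 a positive integer. Then the solvable graph Γ_s(G) is not complete n-partite, i.e., there is no partition of the vertex set G \ Sol(G) into n nonempty parts such that two distinct vertices are adjacent in Γ_s(G) if and only if they lie in different parts. -/

import Mathlib

/-- The solvabilizer of `u` in `G`: the set of `v` such that `⟨u, v⟩` is solvable. -/
def solvabilizer (G : Type*) [Group G] (u : G) : Set G :=
  {v | IsSolvable (Subgroup.closure {u, v})}

/-- The solvable radical `Sol(G)`: elements `u` with `⟨u, v⟩` solvable for all `v`. -/
def solRadical (G : Type*) [Group G] : Set G :=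
  {u | ∀ v : G, IsSolvable (Subgroup.closure {u, v})}

/-- The solvable graph of `G`: vertex set `G \ Sol(G)`, two distinct vertices `u`, `v`
adjacent iff `⟨u, v⟩` is solvable. -/
def solvableGraph (G : Type*) [Group G] : SimpleGraph {u : G // u ∉ solRadical G} where
  Adj u v := u ≠ v ∧ IsSolvable (Subgroup.closure {(u : G), (v : G)})
  symm := by
    constructor
    rintro u v ⟨hne, hs⟩
    exact ⟨hne.symm, by rwa [Set.pair_comm]⟩
  loopless := by constructor; rintro u ⟨hne, _⟩; exact hne rfl

/-!
Being in the same part of a complete multipartite graph is transitive, and for vertices of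
the solvable graph it means generating a non-solvable subgroup. Since `⟨x⁻¹, y⟩ = ⟨x, y⟩`,
a vertex `x` and its inverse lie in the same part as any `y` with `⟨x, y⟩` non-solvable;
as `⟨x, x⁻¹⟩` is cyclic, this forces `x⁻¹ = x`. Thus every vertex is an involution. Given a
vertex `x` and `y` with `⟨x, y⟩` non-solvable, `y` and `x * y` are vertices too, and `x`, `y`,
`x * y` all being involutions forces `x * y = y * x`, so `⟨x, y⟩` would be abelian.
-/

namespace SimpleGraph

variable {α ι : Type*} (H : SimpleGraph α)

theorem isCompleteMultipartite_of_parts (P : ι → Set α) (hP : ∀ v, ∃! i, v ∈ P i)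
    (hadj : ∀ v w, v ≠ w → (H.Adj v w ↔ ¬ ∃ i, v ∈ P i ∧ w ∈ P i)) :
    H.IsCompleteMultipartite := by
  have not_adj_iff : ∀ v w, ¬ H.Adj v w ↔ ∃ i, v ∈ P i ∧ w ∈ P i := by
    intro v w
    rcases eq_or_ne v w with rfl | hvw
    · obtain ⟨i, hi, -⟩ := hP v
      simpa using ⟨i, hi⟩
    · rw [hadj v w hvw, not_not]
  refine ⟨fun u v w huv hvw => ?_⟩
  obtain ⟨i, hu, hv⟩ := (not_adj_iff u v).mp huv
  obtain ⟨j, hv', hw⟩ := (not_adj_iff v w).mp hvw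
  obtain rfl : j = i := (hP v).unique hv' hv
  exact (not_adj_iff u w).mpr ⟨j, hu, hw⟩

end SimpleGraph

namespace Subgroup

variable {G : Type*} [Group G]

theorem isSolvable_of_le {H K : Subgroup G} (hHK : H ≤ K) [Group.IsSolvable K] :
    Group.IsSolvable H :=
  Group.isSolvable_of_isSolvable_injective (inclusion_injective hHK)

open scoped IsMulCommutative in
theorem isSolvable_closure_pair_of_commute {x y : G} (h : Commute x y) :
    Group.IsSolvable (closure {x, y}) := by
  have := isMulCommutative_closure (k := {x, y}) <| by
    rintro a (rfl | rfl) b (rfl | rfl)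
    exacts [rfl, h, h.symm, rfl]
  infer_instance

theorem closure_pair_le_iff {x y : G} {K : Subgroup G} :
    closure {x, y} ≤ K ↔ x ∈ K ∧ y ∈ K := by
  simp [closure_le, Set.insert_subset_iff]

theorem closure_pair_inv_left (x y : G) : closure {x⁻¹, y} = closure {x, y} :=
  le_antisymm
    (closure_pair_le_iff.mpr ⟨inv_mem (subset_closure (by simp)), subset_closure (by simp)⟩)
    (closure_pair_le_iff.mpr
      ⟨by simpa using inv_mem (subset_closure (by simp) : x⁻¹ ∈ closure {x⁻¹, y}),
        subset_closure (by simp)⟩)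

theorem closure_pair_le_closure_mul_left (x y : G) : closure {x, y} ≤ closure {x * y, x} := by
  have hx : x ∈ closure {x * y, x} := subset_closure (by simp)
  have hxy : x * y ∈ closure {x * y, x} := subset_closure (by simp)
  exact closure_pair_le_iff.mpr ⟨hx, by simpa using mul_mem (inv_mem hx) hxy⟩

end Subgroup

section

open Subgroup

variable {G : Type*} [Group G]

theorem notMem_solRadical_of_not_isSolvable_left {x y : G}
    (h : ¬ Group.IsSolvable (closure {x, y})) : x ∉ solRadical G :=
  fun hx => h (hx y)

theorem notMem_solRadical_of_not_isSolvable_right {x y : G}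
    (h : ¬ Group.IsSolvable (closure {x, y})) : y ∉ solRadical G :=
  notMem_solRadical_of_not_isSolvable_left (y := x) (by rwa [Set.pair_comm])

theorem inv_eq_self_of_isCompleteMultipartite (hG : (solvableGraph G).IsCompleteMultipartite)
    {x : G} (hx : x ∉ solRadical G) : x⁻¹ = x := by
  by_contra hne
  obtain ⟨y, hxy⟩ : ∃ y, ¬ Group.IsSolvable (closure {x, y}) := not_forall.mp hx
  have hyx : ¬ Group.IsSolvable (closure {x⁻¹, y}) := by rwa [closure_pair_inv_left]
  let X : {u : G // u ∉ solRadical G} := ⟨x, hx⟩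
  let X' : {u : G // u ∉ solRadical G} := ⟨x⁻¹, notMem_solRadical_of_not_isSolvable_left hyx⟩
  let Y : {u : G // u ∉ solRadical G} := ⟨y, notMem_solRadical_of_not_isSolvable_right hxy⟩
  have hXY : ¬ (solvableGraph G).Adj X Y := fun h => hxy h.2
  have hYX' : ¬ (solvableGraph G).Adj Y X' := fun h => hyx (by rw [Set.pair_comm]; exact h.2)
  refine hG.trans X Y X' hXY hYX' ⟨fun h => hne (congrArg Subtype.val h).symm, ?_⟩
  exact isSolvable_closure_pair_of_commute (Commute.refl x).inv_right

theorem solRadical_eq_univ_of_isCompleteMultipartite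
    (hG : (solvableGraph G).IsCompleteMultipartite) : solRadical G = Set.univ := by
  refine Set.eq_univ_of_forall fun x => by_contra fun hx => ?_
  obtain ⟨y, hxy⟩ : ∃ y, ¬ Group.IsSolvable (closure {x, y}) := not_forall.mp hx
  have hxyx : ¬ Group.IsSolvable (closure {x * y, x}) := fun h =>
    hxy (isSolvable_of_le (closure_pair_le_closure_mul_left x y))
  have hx_inv := inv_eq_self_of_isCompleteMultipartite hG hx
  have hy_inv := inv_eq_self_of_isCompleteMultipartite hG
    (notMem_solRadical_of_not_isSolvable_right hxy)
  have hxy_inv := inv_eq_self_of_isCompleteMultipartite hG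
    (notMem_solRadical_of_not_isSolvable_left hxyx)
  have hcomm : Commute x y := by
    rw [mul_inv_rev, hx_inv, hy_inv] at hxy_inv
    exact hxy_inv.symm
  exact hxy (isSolvable_closure_pair_of_commute hcomm)

end

theorem solvableGraph_not_complete_multipartite_general {G : Type*} [Group G]
    (n : ℕ) (hn : 2 ≤ n) :
    ¬ ∃ P : Fin n → Set {x : G // x ∉ solRadical G},
        (∀ i, (P i).Nonempty) ∧
        (∀ v : {x : G // x ∉ solRadical G}, ∃! i, v ∈ P i) ∧
        ∀ v w : {x : G // x ∉ solRadical G}, v ≠ w →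
          ((solvableGraph G).Adj v w ↔ ¬ ∃ i, v ∈ P i ∧ w ∈ P i) := by
  rintro ⟨P, hne, hP, hadj⟩
  obtain ⟨v, -⟩ := hne ⟨0, by omega⟩
  have hG := (solvableGraph G).isCompleteMultipartite_of_parts P hP hadj
  exact v.2 (Set.eq_univ_iff_forall.mp (solRadical_eq_univ_of_isCompleteMultipartite hG) v)

/-- For `n ≥ 2`, the solvable graph of a finite non-solvable group is not
complete `n`-partite. -/
theorem solvableGraph_not_complete_multipartite {G : Type*} [Group G] [Fintype G]
    (hG : ¬ IsSolvable G) (n : ℕ) (hn : 2 ≤ n) :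
    ¬ ∃ P : Fin n → Set {x : G // x ∉ solRadical G},
        (∀ i, (P i).Nonempty) ∧
        (∀ v : {x : G // x ∉ solRadical G}, ∃! i, v ∈ P i) ∧
        ∀ v w : {x : G // x ∉ solRadical G}, v ≠ w →
          ((solvableGraph G).Adj v w ↔ ¬ ∃ i, v ∈ P i ∧ w ∈ P i) :=
  solvableGraph_not_complete_multipartite_general n hn
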